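/- If the normed space (ℝ^d, ⦀·⦀) is strictly convex, then for every k ∈ {0,…,d} one has {x ∈ ℝ^d : ℓ0(x) ≤ k} ∩ S = B_k ∩ S, where B_k is the unit ball of the coordinate-k norm (with the convention B_0 = {0}). -/

import Mathlib

open scoped BigOperators

noncomputable section

/-- The Euclidean pairing `⟨x,y⟩ = ∑ i, x i * y i` on `Fin d → ℝ`. -/
def dotp {d : ℕ} (x y : Fin d → ℝ) : ℝ := ∑ i, x i * y i

/-- The coordinate subspace `R_K` of vectors vanishing outside `K`. -/
def RK {d : ℕ} (K : Finset (Fin d)) : Set (Fin d → ℝ) := {x | ∀ j ∉ K, x j = 0}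

/-- Orthogonal projection onto `R_K`. -/
def projK {d : ℕ} (K : Finset (Fin d)) (x : Fin d → ℝ) : Fin d → ℝ :=
  fun i => if i ∈ K then x i else 0

/-- The ℓ0 pseudonorm: number of nonzero components. -/
def ell0 {d : ℕ} (x : Fin d → ℝ) : ℕ := (Function.support x).ncard

/-- `N` is a norm on `ℝ^d`. -/
structure IsNorm {d : ℕ} (N : (Fin d → ℝ) → ℝ) : Prop where
  eq_zero_iff : ∀ x, N x = 0 ↔ x = 0
  smul : ∀ (c : ℝ) (x : Fin d → ℝ), N (c • x) = |c| * N x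
  triangle : ∀ x y, N (x + y) ≤ N x + N y

/-- `⦀y⦀_{K,★}`: the dual norm (w.r.t. the Euclidean pairing), on the subspace `R_K`,
of the restriction of `N` to `R_K`. -/
def restStar {d : ℕ} (N : (Fin d → ℝ) → ℝ) (K : Finset (Fin d)) (y : Fin d → ℝ) : ℝ :=
  sSup {r | ∃ x ∈ RK K, N x ≤ 1 ∧ r = dotp x y}

/-- The dual coordinate-k norm `⦀y⦀_{k,★} = sup_{|K| ≤ k} ⦀y_K⦀_{K,★}`. -/
def dualCoord {d : ℕ} (N : (Fin d → ℝ) → ℝ) (k : ℕ) (y : Fin d → ℝ) : ℝ :=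
  sSup {r | ∃ K : Finset (Fin d), K.card ≤ k ∧ r = restStar N K (projK K y)}

/-- The coordinate-k norm: the dual norm of the dual coordinate-k norm. -/
def coordNorm {d : ℕ} (N : (Fin d → ℝ) → ℝ) (k : ℕ) (x : Fin d → ℝ) : ℝ :=
  sSup {r | ∃ y : Fin d → ℝ, dualCoord N k y ≤ 1 ∧ r = dotp x y}

/-- The unit ball of the coordinate-k norm, with the convention `B_0 = {0}`. -/
def coordBall {d : ℕ} (N : (Fin d → ℝ) → ℝ) (k : ℕ) : Set (Fin d → ℝ) :=
  if k = 0 then {0} else {x | coordNorm N k x ≤ 1}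

/-!
A unit vector `x` with `coordNorm N k x ≤ 1` lies in the convex hull of the compact set of
`k`-sparse vectors of the unit ball: the dual coordinate-`k` norm is the support function of that
set, so a separating functional given by Hahn–Banach would be a dual vector `y` with
`dualCoord N k y ≤ 1 < dotp x y`. By strict convexity `x` is an extreme point of the unit ball,
which contains that convex hull, so `x` is itself one of the sparse vectors.
-/

open Set in
theorem IsCompact.convexHull_of_finiteDimensional {E : Type*} [NormedAddCommGroup E]
    [NormedSpace ℝ E] [FiniteDimensional ℝ E] {s : Set E} (hs : IsCompact s) :
    IsCompact (convexHull ℝ s) := by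
  let Φ : (m : ℕ) → (Fin m → ℝ) × (Fin m → E) → E := fun _ p => ∑ i, p.1 i • p.2 i
  have hΦ : ∀ m, Continuous (Φ m) := fun m => by fun_prop
  -- By Carathéodory, convex combinations of at most `finrank ℝ E + 1` points suffice.
  suffices convexHull ℝ s = ⋃ m ∈ Finset.range (Module.finrank ℝ E + 2),
      Φ m '' (stdSimplex ℝ (Fin m) ×ˢ univ.pi fun _ => s) by
    rw [this]
    exact (Finset.range _).isCompact_biUnion fun m _ =>
      (IsCompact.prod (isCompact_stdSimplex ℝ (Fin m)) (isCompact_univ_pi fun _ => hs)).image (hΦ m)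
  refine Subset.antisymm (fun x hx => ?_) ?_
  · obtain ⟨ι, _, z, w, hzs, hz, hw0, hw1, rfl⟩ := eq_pos_convex_span_of_mem_convexHull hx
    have hcard : Fintype.card ι ≤ Module.finrank ℝ E + 1 :=
      hz.card_le_finrank_succ.trans (by gcongr; exact Submodule.finrank_le _)
    let e := Fintype.equivFin ι
    refine mem_biUnion (x := Fintype.card ι) (by simpa [Nat.lt_succ_iff] using hcard)
      ⟨(w ∘ e.symm, z ∘ e.symm), ⟨⟨fun i => (hw0 _).le, ?_⟩, fun i _ => hzs ⟨_, rfl⟩⟩, ?_⟩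
    · simpa [Function.comp_def] using (e.symm.sum_comp w).trans hw1
    · exact e.symm.sum_comp fun i => w i • z i
  · refine iUnion₂_subset fun m _ => ?_
    rintro _ ⟨⟨w, z⟩, ⟨⟨hw0, hw1⟩, hz⟩, rfl⟩
    exact (convex_convexHull ℝ s).sum_mem (fun i _ => hw0 i) hw1
      fun i _ => subset_convexHull ℝ s (hz i (mem_univ i))

theorem mem_of_mem_extremePoints_of_mem_convexHull {E : Type*} [AddCommGroup E] [Module ℝ E]
    {A s : Set E} {x : E} (hA : Convex ℝ A) (hsA : s ⊆ A) (hx : x ∈ A.extremePoints ℝ)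
    (hxs : x ∈ convexHull ℝ s) : x ∈ s :=
  extremePoints_convexHull_subset <|
    inter_extremePoints_subset_extremePoints_of_subset (convexHull_min hsA hA) ⟨hxs, hx⟩

namespace IsNorm

variable {d : ℕ} {N : (Fin d → ℝ) → ℝ}

theorem map_zero (hN : IsNorm N) : N 0 = 0 := (hN.eq_zero_iff 0).2 rfl

theorem convexOn (hN : IsNorm N) : ConvexOn ℝ Set.univ N := by
  refine ⟨convex_univ, fun x _ y _ a b ha hb _ => ?_⟩
  calc N (a • x + b • y) ≤ N (a • x) + N (b • y) := hN.triangle _ _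
    _ = a • N x + b • N y := by rw [hN.smul, hN.smul, abs_of_nonneg ha, abs_of_nonneg hb]; rfl

theorem continuous (hN : IsNorm N) : Continuous N :=
  hN.convexOn.locallyLipschitz.continuous

theorem nonneg (hN : IsNorm N) (x : Fin d → ℝ) : 0 ≤ N x := by
  have h := hN.triangle x (-x)
  rw [add_neg_cancel, hN.map_zero, ← neg_one_smul ℝ x, hN.smul] at h
  norm_num at h
  linarith

theorem pos (hN : IsNorm N) {x : Fin d → ℝ} (hx : x ≠ 0) : 0 < N x :=
  (hN.nonneg x).lt_of_ne (Ne.symm (mt (hN.eq_zero_iff x).1 hx))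

theorem isBounded_setOf_le_one (hN : IsNorm N) : Bornology.IsBounded {x | N x ≤ 1} := by
  obtain ⟨m, hm, hmN⟩ : ∃ m > 0, ∀ u ∈ Metric.sphere (0 : Fin d → ℝ) 1, m ≤ N u := by
    rcases (Metric.sphere (0 : Fin d → ℝ) 1).eq_empty_or_nonempty with h | h
    · exact ⟨1, one_pos, by simp [h]⟩
    obtain ⟨u₀, hu₀, hmin⟩ := (isCompact_sphere _ _).exists_isMinOn h hN.continuous.continuousOn
    exact ⟨N u₀, hN.pos (ne_zero_of_mem_unit_sphere ⟨u₀, hu₀⟩), hmin⟩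
  refine (Metric.isBounded_closedBall (x := 0) (r := m⁻¹)).subset fun x hx => ?_
  rw [mem_closedBall_zero_iff]
  rcases eq_or_ne x 0 with rfl | hx0
  · simpa using hm.le
  have hxn : 0 < ‖x‖ := norm_pos_iff.2 hx0
  have := hmN (‖x‖⁻¹ • x) (by simp [norm_smul, hxn.ne'])
  rw [hN.smul, abs_of_pos (inv_pos.2 hxn)] at this
  rw [le_inv_comm₀ hxn hm]
  calc m ≤ ‖x‖⁻¹ * N x := this
    _ ≤ ‖x‖⁻¹ := mul_le_of_le_one_right (inv_nonneg.2 hxn.le) hx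

theorem isCompact_setOf_le_one (hN : IsNorm N) : IsCompact {x | N x ≤ 1} :=
  Metric.isCompact_of_isClosed_isBounded (isClosed_le hN.continuous continuous_const)
    hN.isBounded_setOf_le_one

theorem convex_setOf_le_one (hN : IsNorm N) : Convex ℝ {x | N x ≤ 1} := by
  simpa using hN.convexOn.convex_le 1

end IsNorm

section Sparse

variable {d : ℕ}

theorem isClosed_RK (K : Finset (Fin d)) : IsClosed (RK K) := by
  simp only [RK, Set.ofPred_forall]
  exact isClosed_iInter fun j => isClosed_iInter fun _ =>
    isClosed_eq (continuous_apply j) continuous_const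

theorem ell0_le_iff {x : Fin d → ℝ} {k : ℕ} :
    ell0 x ≤ k ↔ ∃ K : Finset (Fin d), K.card ≤ k ∧ x ∈ RK K := by
  classical
  constructor
  · intro hx
    refine ⟨Finset.univ.filter (x · ≠ 0), ?_, fun j hj => by simpa using hj⟩
    rw [← Set.ncard_coe_finset, Finset.coe_filter_univ]
    exact hx
  · rintro ⟨K, hK, hxK⟩
    calc ell0 x ≤ (K : Set (Fin d)).ncard :=
          Set.ncard_le_ncard (fun j hj => by_contra fun hjK => hj (hxK j hjK)) K.finite_toSet
      _ = K.card := Set.ncard_coe_finset K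
      _ ≤ k := hK

theorem isClosed_setOf_ell0_le (k : ℕ) : IsClosed {x : Fin d → ℝ | ell0 x ≤ k} := by
  have : {x : Fin d → ℝ | ell0 x ≤ k} = ⋃ K ∈ {K : Finset (Fin d) | K.card ≤ k}, RK K := by
    ext x; simp [ell0_le_iff]
  rw [this]
  exact (Set.toFinite _).isClosed_biUnion fun K _ => isClosed_RK K

end Sparse

section Dual

variable {d : ℕ} {N : (Fin d → ℝ) → ℝ} {k : ℕ}

theorem dotp_smul_right (c : ℝ) (x y : Fin d → ℝ) : dotp x (c • y) = c * dotp x y := by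
  simp only [dotp, Pi.smul_apply, smul_eq_mul, Finset.mul_sum]
  exact Finset.sum_congr rfl fun i _ => by ring

theorem dotp_projK_of_mem {K : Finset (Fin d)} {x : Fin d → ℝ} (hx : x ∈ RK K)
    (y : Fin d → ℝ) : dotp x (projK K y) = dotp x y := by
  refine Finset.sum_congr rfl fun i _ => ?_
  by_cases hi : i ∈ K
  · simp [projK, hi]
  · simp [hx i hi]

theorem continuous_dotp_left (y : Fin d → ℝ) : Continuous fun x : Fin d → ℝ => dotp x y := by
  unfold dotp
  fun_prop

theorem exists_dotp_eq (f : (Fin d → ℝ) →ₗ[ℝ] ℝ) : ∃ y, ∀ x, f x = dotp x y :=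
  ⟨_, fun x => (f.pi_apply_eq_sum_univ x).trans rfl⟩

def sparseBall (N : (Fin d → ℝ) → ℝ) (k : ℕ) : Set (Fin d → ℝ) := {u | ell0 u ≤ k ∧ N u ≤ 1}

theorem IsNorm.isCompact_sparseBall (hN : IsNorm N) (k : ℕ) : IsCompact (sparseBall N k) :=
  hN.isCompact_setOf_le_one.inter_left (isClosed_setOf_ell0_le k)

theorem IsNorm.bddAbove_restStar (hN : IsNorm N) (K : Finset (Fin d)) (y : Fin d → ℝ) :
    BddAbove {r | ∃ x ∈ RK K, N x ≤ 1 ∧ r = dotp x y} :=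
  (hN.isCompact_setOf_le_one.image (continuous_dotp_left y)).bddAbove.mono <| by
    rintro _ ⟨x, -, hx, rfl⟩
    exact ⟨x, hx, rfl⟩

theorem IsNorm.dotp_le_restStar (hN : IsNorm N) {K : Finset (Fin d)} {x : Fin d → ℝ}
    (hx : x ∈ RK K) (hNx : N x ≤ 1) (y : Fin d → ℝ) : dotp x y ≤ restStar N K y :=
  le_csSup (hN.bddAbove_restStar K y) ⟨x, hx, hNx, rfl⟩

theorem IsNorm.restStar_le (hN : IsNorm N) {K : Finset (Fin d)} {y : Fin d → ℝ} {b : ℝ}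
    (h : ∀ x ∈ RK K, N x ≤ 1 → dotp x y ≤ b) : restStar N K y ≤ b :=
  csSup_le ⟨_, 0, fun _ _ => rfl, by simp [hN.map_zero], rfl⟩ <| by
    rintro _ ⟨x, hx, hNx, rfl⟩
    exact h x hx hNx

theorem restStar_le_dualCoord {K : Finset (Fin d)} (hK : K.card ≤ k) (y : Fin d → ℝ) :
    restStar N K (projK K y) ≤ dualCoord N k y := by
  refine le_csSup (Set.Finite.bddAbove ?_) ⟨K, hK, rfl⟩
  refine (Set.finite_range fun K : Finset (Fin d) => restStar N K (projK K y)).subset ?_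
  rintro _ ⟨K, -, rfl⟩
  exact ⟨K, rfl⟩

theorem dualCoord_le {y : Fin d → ℝ} {b : ℝ}
    (h : ∀ K : Finset (Fin d), K.card ≤ k → restStar N K (projK K y) ≤ b) :
    dualCoord N k y ≤ b :=
  csSup_le ⟨_, ∅, Nat.zero_le k, rfl⟩ <| by
    rintro _ ⟨K, hK, rfl⟩
    exact h K hK

theorem IsNorm.dotp_le_dualCoord (hN : IsNorm N) {u : Fin d → ℝ} (hu : u ∈ sparseBall N k)
    (y : Fin d → ℝ) : dotp u y ≤ dualCoord N k y := by
  obtain ⟨K, hK, huK⟩ := ell0_le_iff.1 hu.1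
  calc dotp u y = dotp u (projK K y) := (dotp_projK_of_mem huK y).symm
    _ ≤ restStar N K (projK K y) := hN.dotp_le_restStar huK hu.2 _
    _ ≤ dualCoord N k y := restStar_le_dualCoord hK y

theorem IsNorm.dualCoord_le_of_forall_dotp_le (hN : IsNorm N) {y : Fin d → ℝ} {b : ℝ}
    (h : ∀ u ∈ sparseBall N k, dotp u y ≤ b) : dualCoord N k y ≤ b :=
  dualCoord_le fun K hK => hN.restStar_le fun u huK hNu => by
    rw [dotp_projK_of_mem huK]
    exact h u ⟨ell0_le_iff.2 ⟨K, hK, huK⟩, hNu⟩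

theorem IsNorm.abs_le_mul_dualCoord (hN : IsNorm N) (hk : 1 ≤ k) (y : Fin d → ℝ) (i : Fin d) :
    |y i| ≤ N (Pi.single i 1) * dualCoord N k y := by
  have hNe : 0 < N (Pi.single i 1) := hN.pos (by simp)
  have key : ∀ s : ℝ, |s| = 1 → s * y i ≤ N (Pi.single i 1) * dualCoord N k y := by
    intro s hs
    let u : Fin d → ℝ := (s / N (Pi.single i 1)) • Pi.single i 1
    have hu : u ∈ sparseBall N k := by
      refine ⟨ell0_le_iff.2 ⟨{i}, by simpa using hk, fun j hj => ?_⟩, ?_⟩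
      · simp [u, Finset.mem_singleton.not.1 hj]
      · rw [hN.smul, abs_div, hs, abs_of_pos hNe, one_div_mul_cancel hNe.ne']
    have hdot : dotp u y = s / N (Pi.single i 1) * y i := by
      simp [u, dotp, Pi.single_apply]
    have := hN.dotp_le_dualCoord hu y
    rw [hdot, div_mul_eq_mul_div, div_le_iff₀ hNe] at this
    linarith
  exact abs_le'.2 ⟨by simpa using key 1 (by simp), by simpa using key (-1) (by simp)⟩

theorem IsNorm.bddAbove_coordNorm (hN : IsNorm N) (hk : 1 ≤ k) (x : Fin d → ℝ) :
    BddAbove {r | ∃ y : Fin d → ℝ, dualCoord N k y ≤ 1 ∧ r = dotp x y} := by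
  refine ⟨∑ i, |x i| * N (Pi.single i 1), ?_⟩
  rintro _ ⟨y, hy, rfl⟩
  refine Finset.sum_le_sum fun i _ => ?_
  calc x i * y i ≤ |x i| * |y i| := (le_abs_self _).trans (abs_mul _ _).le
    _ ≤ |x i| * N (Pi.single i 1) := by
      gcongr
      exact (hN.abs_le_mul_dualCoord hk y i).trans
        (mul_le_of_le_one_right (hN.nonneg _) hy)

theorem IsNorm.coordNorm_le_one_of_mem_sparseBall (hN : IsNorm N) {u : Fin d → ℝ}
    (hu : u ∈ sparseBall N k) : coordNorm N k u ≤ 1 :=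
  Real.sSup_le (by rintro _ ⟨y, hy, rfl⟩; exact (hN.dotp_le_dualCoord hu y).trans hy) zero_le_one

theorem IsNorm.mem_convexHull_sparseBall (hN : IsNorm N) (hk : 1 ≤ k) {x : Fin d → ℝ}
    (hx : coordNorm N k x ≤ 1) : x ∈ convexHull ℝ (sparseBall N k) := by
  by_contra hx'
  obtain ⟨f, c, hfc, hcx⟩ := geometric_hahn_banach_closed_point (convex_convexHull ℝ _)
    (hN.isCompact_sparseBall k).convexHull_of_finiteDimensional.isClosed hx'
  have hc : 0 < c := by
    simpa using hfc 0 (subset_convexHull ℝ _ ⟨by simp [ell0], by simp [hN.map_zero]⟩)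
  obtain ⟨y, hfy⟩ : ∃ y, ∀ z, f z = dotp z y := exists_dotp_eq f.toLinearMap
  have hy : dualCoord N k (c⁻¹ • y) ≤ 1 := hN.dualCoord_le_of_forall_dotp_le fun u hu => by
    rw [dotp_smul_right, ← hfy, inv_mul_le_one₀ hc]
    exact (hfc u (subset_convexHull ℝ _ hu)).le
  have hxy : 1 < dotp x (c⁻¹ • y) := by
    rwa [dotp_smul_right, ← hfy, lt_inv_mul_iff₀ hc, mul_one]
  exact hxy.not_ge ((le_csSup (hN.bddAbove_coordNorm hk x) ⟨_, hy, rfl⟩).trans hx)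

end Dual

theorem statement9_general {d : ℕ} (N : (Fin d → ℝ) → ℝ) (hN : IsNorm N)
    (hsc : ∀ x : Fin d → ℝ, N x = 1 → x ∈ Set.extremePoints ℝ {z : Fin d → ℝ | N z ≤ 1})
    (k : ℕ) :
    {x : Fin d → ℝ | ell0 x ≤ k} ∩ {x | N x = 1} = coordBall N k ∩ {x | N x = 1} := by
  ext x
  simp only [Set.mem_inter_iff, Set.mem_ofPred_eq, and_congr_left_iff]
  intro hx1
  rcases Nat.eq_zero_or_pos k with rfl | hk
  · rw [coordBall, if_pos rfl, Set.mem_singleton_iff, nonpos_iff_eq_zero, ell0,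
      Set.ncard_eq_zero, Function.support_eq_empty_iff]
  rw [coordBall, if_neg hk.ne', Set.mem_ofPred_eq]
  refine ⟨fun hx => hN.coordNorm_le_one_of_mem_sparseBall ⟨hx, hx1.le⟩, fun hx => ?_⟩
  exact (mem_of_mem_extremePoints_of_mem_convexHull hN.convex_setOf_le_one (fun u hu => hu.2)
    (hsc x hx1) (hN.mem_convexHull_sparseBall hk hx)).1

theorem statement9 {d : ℕ} (N : (Fin d → ℝ) → ℝ) (hN : IsNorm N)
    (hsc : ∀ x : Fin d → ℝ, N x = 1 → x ∈ Set.extremePoints ℝ {z : Fin d → ℝ | N z ≤ 1})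
    (k : ℕ) (hk : k ≤ d) :
    {x : Fin d → ℝ | ell0 x ≤ k} ∩ {x | N x = 1} = coordBall N k ∩ {x | N x = 1} :=
  statement9_general N hN hsc k
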